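/- Let A be a normed algebra over ℝ with p < 1 and ε ≥ 0, and f : A → X into a Banach space with ‖f(a+b) − f(a) − f(b)‖ ≤ ε(‖a‖^p + ‖b‖^p) for all a, b. Then D(a) = limₘ 2^{−m} f(2^m a) exists, is additive, and satisfies ‖f(a) − D(a)‖ ≤ (2ε/(2−2^p))‖a‖^p for all a ∈ A, and D is the unique additive map with this property. -/

import Mathlib

/-!
Hyers' direct method. With `u_m(a) = 2^{-m} f(2^m a)` and `r = 2^{p-1} < 1`, the Cauchy inequality at
`(2^m a, 2^m b)` bounds the additivity defect of `u_m` by `ε (‖a‖^p + ‖b‖^p) r^m`. Taking `a = b` gives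
`‖u_m(a) - u_{m+1}(a)‖ ≤ ε ‖a‖^p r^m`, so `u(a)` converges to some `D(a)` with
`‖f(a) - D(a)‖ ≤ ε ‖a‖^p / (1 - r) = 2ε/(2 - 2^p) ‖a‖^p`, and `D` is additive. If `g` is another additive
approximant, the additive map `g - D` satisfies `‖(g - D)(a)‖ = 2^{-m} ‖(g - D)(2^m a)‖ ≤ C ‖a‖^p r^m → 0`.
-/

open Filter Topology

section Numerics

variable {p : ℝ}

lemma two_rpow_sub_one_lt_one (hp : p < 1) : (2 : ℝ) ^ (p - 1) < 1 :=
  Real.rpow_lt_one_of_one_lt_of_neg one_lt_two (by linarith)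

lemma one_sub_two_rpow_sub_one (p : ℝ) : 1 - (2 : ℝ) ^ (p - 1) = (2 - 2 ^ p) / 2 := by
  rw [Real.rpow_sub_one two_ne_zero]
  ring

lemma tendsto_mul_two_rpow_sub_one_pow (hp : p < 1) (C : ℝ) :
    Tendsto (fun m : ℕ => C * ((2 : ℝ) ^ (p - 1)) ^ m) atTop (𝓝 0) := by
  simpa using (tendsto_pow_atTop_nhds_zero_of_lt_one (by positivity)
    (two_rpow_sub_one_lt_one hp)).const_mul C

end Numerics

section HyersSeq

variable {E X : Type*} [AddCommMonoid E] [AddCommGroup X] [Module ℝ X]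

noncomputable def hyersSeq (f : E → X) (a : E) (m : ℕ) : X :=
  ((2 : ℝ) ^ m)⁻¹ • f ((2 ^ m : ℕ) • a)

@[simp]
lemma hyersSeq_zero (f : E → X) (a : E) : hyersSeq f a 0 = f a := by
  simp [hyersSeq]

lemma hyersSeq_add_self (f : E → X) (a : E) (m : ℕ) :
    hyersSeq f (a + a) m = (2 : ℝ) • hyersSeq f a (m + 1) := by
  have hdouble : (2 ^ m : ℕ) • (a + a) = (2 ^ (m + 1) : ℕ) • a := by
    rw [← two_nsmul, smul_smul, pow_succ]
  rw [hyersSeq, hyersSeq, hdouble, smul_smul]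
  congr 1
  rw [pow_succ]
  field_simp

end HyersSeq

section Hyers

variable {E X : Type*} [SeminormedAddCommGroup E] [NormedSpace ℝ E]
  [NormedAddCommGroup X] [NormedSpace ℝ X] {p ε : ℝ}

lemma norm_two_pow_nsmul (m : ℕ) (x : E) : ‖(2 ^ m : ℕ) • x‖ = 2 ^ m * ‖x‖ := by
  rw [← Nat.cast_smul_eq_nsmul ℝ, norm_smul]
  simp

lemma inv_two_pow_mul_norm_two_pow_nsmul_rpow (p : ℝ) (m : ℕ) (x : E) :
    ((2 : ℝ) ^ m)⁻¹ * ‖(2 ^ m : ℕ) • x‖ ^ p = ((2 : ℝ) ^ (p - 1)) ^ m * ‖x‖ ^ p := by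
  rw [norm_two_pow_nsmul, Real.mul_rpow (by positivity) (norm_nonneg x), ← mul_assoc,
    Real.rpow_pow_comm zero_le_two, Real.rpow_sub_one (by positivity), inv_mul_eq_div]

variable {f : E → X}

lemma norm_hyersSeq_add_sub_le (hf : ∀ a b, ‖f (a + b) - f a - f b‖ ≤ ε * (‖a‖ ^ p + ‖b‖ ^ p))
    (a b : E) (m : ℕ) :
    ‖hyersSeq f (a + b) m - (hyersSeq f a m + hyersSeq f b m)‖ ≤
      ε * (‖a‖ ^ p + ‖b‖ ^ p) * ((2 : ℝ) ^ (p - 1)) ^ m := by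
  have hdefect : hyersSeq f (a + b) m - (hyersSeq f a m + hyersSeq f b m) =
      ((2 : ℝ) ^ m)⁻¹ • (f ((2 ^ m : ℕ) • a + (2 ^ m : ℕ) • b) - f ((2 ^ m : ℕ) • a)
        - f ((2 ^ m : ℕ) • b)) := by
    simp only [hyersSeq, smul_add, smul_sub]
    abel
  rw [hdefect, norm_smul, norm_inv, norm_pow, Real.norm_two]
  calc ((2 : ℝ) ^ m)⁻¹ * ‖f ((2 ^ m : ℕ) • a + (2 ^ m : ℕ) • b) - f ((2 ^ m : ℕ) • a)
        - f ((2 ^ m : ℕ) • b)‖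
      ≤ ((2 : ℝ) ^ m)⁻¹ * (ε * (‖(2 ^ m : ℕ) • a‖ ^ p + ‖(2 ^ m : ℕ) • b‖ ^ p)) := by
        gcongr
        exact hf _ _
    _ = ε * (‖a‖ ^ p + ‖b‖ ^ p) * ((2 : ℝ) ^ (p - 1)) ^ m := by
        rw [mul_left_comm, mul_add, inv_two_pow_mul_norm_two_pow_nsmul_rpow,
          inv_two_pow_mul_norm_two_pow_nsmul_rpow]
        ring

lemma dist_hyersSeq_succ_le (hf : ∀ a b, ‖f (a + b) - f a - f b‖ ≤ ε * (‖a‖ ^ p + ‖b‖ ^ p))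
    (a : E) (m : ℕ) :
    dist (hyersSeq f a m) (hyersSeq f a (m + 1)) ≤ ε * ‖a‖ ^ p * ((2 : ℝ) ^ (p - 1)) ^ m := by
  have h := norm_hyersSeq_add_sub_le hf a a m
  rw [hyersSeq_add_self, ← two_smul ℝ (hyersSeq f a m), ← smul_sub, norm_smul,
    Real.norm_two] at h
  rw [dist_comm, dist_eq_norm]
  linarith

lemma exists_tendsto_hyersSeq [CompleteSpace X] (hp : p < 1)
    (hf : ∀ a b, ‖f (a + b) - f a - f b‖ ≤ ε * (‖a‖ ^ p + ‖b‖ ^ p)) (a : E) :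
    ∃ L, Tendsto (hyersSeq f a) atTop (𝓝 L) ∧ ‖f a - L‖ ≤ 2 * ε / (2 - 2 ^ p) * ‖a‖ ^ p := by
  have hr := two_rpow_sub_one_lt_one hp
  obtain ⟨L, hL⟩ := cauchySeq_tendsto_of_complete
    (cauchySeq_of_le_geometric _ _ hr (dist_hyersSeq_succ_le hf a))
  refine ⟨L, hL, ?_⟩
  have hbound := dist_le_of_le_geometric_of_tendsto₀ _ _ hr (dist_hyersSeq_succ_le hf a) hL
  rw [hyersSeq_zero, dist_eq_norm, one_sub_two_rpow_sub_one] at hbound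
  calc ‖f a - L‖ ≤ ε * ‖a‖ ^ p / ((2 - 2 ^ p) / 2) := hbound
    _ = 2 * ε / (2 - 2 ^ p) * ‖a‖ ^ p := by field_simp

lemma map_add_of_tendsto_hyersSeq (hp : p < 1)
    (hf : ∀ a b, ‖f (a + b) - f a - f b‖ ≤ ε * (‖a‖ ^ p + ‖b‖ ^ p)) {D : E → X}
    (hD : ∀ a, Tendsto (hyersSeq f a) atTop (𝓝 (D a))) (a b : E) :
    D (a + b) = D a + D b := by
  have hdefect : Tendsto (fun m => hyersSeq f (a + b) m - (hyersSeq f a m + hyersSeq f b m))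
      atTop (𝓝 0) :=
    squeeze_zero_norm (norm_hyersSeq_add_sub_le hf a b) (tendsto_mul_two_rpow_sub_one_pow hp _)
  have hsum := hdefect.add ((hD a).add (hD b))
  simp only [sub_add_cancel, zero_add] at hsum
  exact tendsto_nhds_unique (hD (a + b)) hsum

lemma AddMonoidHom.eq_zero_of_norm_le_mul_rpow (h : E →+ X) (hp : p < 1) {C : ℝ}
    (hC : ∀ a, ‖h a‖ ≤ C * ‖a‖ ^ p) : h = 0 := by
  ext a
  have hrescaled : ∀ m : ℕ, ‖h a‖ ≤ C * ‖a‖ ^ p * ((2 : ℝ) ^ (p - 1)) ^ m := fun m =>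
    calc ‖h a‖ = ((2 : ℝ) ^ m)⁻¹ * ‖h ((2 ^ m : ℕ) • a)‖ := by
          rw [map_nsmul, norm_two_pow_nsmul, inv_mul_cancel_left₀ (by positivity)]
      _ ≤ ((2 : ℝ) ^ m)⁻¹ * (C * ‖(2 ^ m : ℕ) • a‖ ^ p) := by gcongr; exact hC _
      _ = C * ‖a‖ ^ p * ((2 : ℝ) ^ (p - 1)) ^ m := by
          rw [mul_left_comm, inv_two_pow_mul_norm_two_pow_nsmul_rpow]
          ring
  exact norm_le_zero_iff.mp
    (ge_of_tendsto (tendsto_mul_two_rpow_sub_one_pow hp _) (Eventually.of_forall hrescaled))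

lemma eq_of_map_add_of_norm_sub_le_mul_rpow (hp : p < 1) {g D : E → X}
    (hg : ∀ a b, g (a + b) = g a + g b) (hD : ∀ a b, D (a + b) = D a + D b) {K : ℝ}
    (hfg : ∀ a, ‖f a - g a‖ ≤ K * ‖a‖ ^ p) (hfD : ∀ a, ‖f a - D a‖ ≤ K * ‖a‖ ^ p) : g = D := by
  have hzero := (AddMonoidHom.mk' g hg - AddMonoidHom.mk' D hD).eq_zero_of_norm_le_mul_rpow hp
    (C := 2 * K) fun a => by
      have htriangle := norm_sub_le_norm_sub_add_norm_sub (g a) (f a) (D a)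
      rw [norm_sub_rev (g a) (f a)] at htriangle
      simp only [AddMonoidHom.sub_apply, AddMonoidHom.mk'_apply]
      linarith [hfg a, hfD a]
  funext a
  exact sub_eq_zero.mp (DFunLike.congr_fun hzero a)

end Hyers

theorem stmt_16_general {A X : Type*} [NormedRing A] [NormedAlgebra ℝ A]
    [NormedAddCommGroup X] [NormedSpace ℝ X] [CompleteSpace X]
    (ε p : ℝ) (hp : p < 1) (f : A → X)
    (hadd : ∀ a b : A, ‖f (a + b) - f a - f b‖ ≤ ε * (‖a‖ ^ p + ‖b‖ ^ p)) :
    ∃ D : A → X,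
      (∀ a : A, Tendsto (fun m : ℕ => ((2 : ℝ) ^ m)⁻¹ • f ((2 ^ m : ℕ) • a))
        atTop (𝓝 (D a))) ∧
      (∀ a b : A, D (a + b) = D a + D b) ∧
      (∀ a : A, ‖f a - D a‖ ≤ 2 * ε / (2 - 2 ^ p) * ‖a‖ ^ p) ∧
      (∀ g : A → X, (∀ a b : A, g (a + b) = g a + g b) →
        (∀ a : A, ‖f a - g a‖ ≤ 2 * ε / (2 - 2 ^ p) * ‖a‖ ^ p) → g = D) := by
  choose D hD hfD using exists_tendsto_hyersSeq hp hadd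
  have hDadd := map_add_of_tendsto_hyersSeq hp hadd hD
  exact ⟨D, hD, hDadd, hfD, fun g hg hfg => eq_of_map_add_of_norm_sub_le_mul_rpow hp hg hDadd hfg hfD⟩

/-- Rassias's stability theorem for p < 1, as used in the paper. -/
theorem stmt_16 {A X : Type*} [NormedRing A] [NormedAlgebra ℝ A]
    [NormedAddCommGroup X] [NormedSpace ℝ X] [CompleteSpace X]
    (ε p : ℝ) (hε : 0 ≤ ε) (hp : p < 1) (f : A → X)
    (hadd : ∀ a b : A, ‖f (a + b) - f a - f b‖ ≤ ε * (‖a‖ ^ p + ‖b‖ ^ p)) :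
    ∃ D : A → X,
      (∀ a : A, Tendsto (fun m : ℕ => ((2 : ℝ) ^ m)⁻¹ • f ((2 ^ m : ℕ) • a))
        atTop (𝓝 (D a))) ∧
      (∀ a b : A, D (a + b) = D a + D b) ∧
      (∀ a : A, ‖f a - D a‖ ≤ 2 * ε / (2 - 2 ^ p) * ‖a‖ ^ p) ∧
      (∀ g : A → X, (∀ a b : A, g (a + b) = g a + g b) →
        (∀ a : A, ‖f a - g a‖ ≤ 2 * ε / (2 - 2 ^ p) * ‖a‖ ^ p) → g = D) :=
  stmt_16_general ε p hp f hadd
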